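/- arXiv:2204.02447 — 8 statements merged into one kernel-verified Lean document; each statement's English description precedes it below -/
import Mathlib

section
/- Let A be a finite set, G a group, H ≤ G a subgroup, F ⊆ H a finite subset and L ⊆ A^F a set of patterns. Let X ⊆ A^G and Y ⊆ A^H be the subshifts of finite type defined by (F, L) on G and on H respectively, and let (g_i)_{i ∈ I} be a complete set of left coset representatives of H in G. Then a configuration x ∈ A^G belongs to X if and only if for every i ∈ I the configuration y_i ∈ A^H defined by y_i(h) = x(g_i h) belongs to Y. -/
variable {G A : Type*}

/-- The left shift action of a group on configurations: `(shift g x) h = x (g⁻¹ * h)`. -/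
def shift [Group G] (g : G) (x : G → A) : G → A := fun h => x (g⁻¹ * h)

/-- The subshift of finite type on `G` defined by the shape `F` and the pattern set `L`:
all configurations `x` such that for every `g`, the restriction of `g • x` to `F` lies in `L`. -/
def SFT [Group G] (F : Set G) (L : Set (F → A)) : Set (G → A) :=
  {x | ∀ g : G, (fun f : F => shift g x f) ∈ L}

/-- The subshift of finite type on the subgroup `H` defined by the shape `F ⊆ H`
and the pattern set `L`. -/
def SFTon [Group G] (H : Subgroup G) (F : Set G) (hF : F ⊆ (H : Set G)) (L : Set (F → A)) :
    Set (↥H → A) :=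
  {y | ∀ h : ↥H, (fun f : F => y (h⁻¹ * ⟨(f : G), hF f.2⟩)) ∈ L}

/-- The free part of a subshift: elements acting freely on every configuration. -/
def freePart [Group G] (X : Set (G → A)) : Set G := {g | ∀ x ∈ X, shift g x ≠ x}

/-- A configuration `x ∈ A^G` belongs to the SFT `X` defined by `(F, L)` on `G`
iff, for every left coset representative `gr i`, the configuration `h ↦ x (gr i * h)` belongs to
the SFT `Y` defined by `(F, L)` on `H`. -/
theorem sft_mem_iff_coset_restrictions_mem
    [Group G] [Finite A] (H : Subgroup G) (F : Set G) (hFfin : F.Finite)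
    (hF : F ⊆ (H : Set G)) (L : Set (F → A))
    {ι : Type*} (gr : ι → G)
    (hrep : Function.Bijective (fun i : ι => (QuotientGroup.mk (gr i) : G ⧸ H)))
    (x : G → A) :
    x ∈ SFT F L ↔ ∀ i : ι, (fun h : ↥H => x (gr i * h)) ∈ SFTon H F hF L := by
  constructor
  · intro hx i h
    have := hx (h * (gr i)⁻¹)
    convert this using 2 with f
    simp [shift, mul_assoc]
  · intro hy g
    obtain ⟨i, hi⟩ := hrep.2 (QuotientGroup.mk g⁻¹)
    have hmem : (gr i)⁻¹ * g⁻¹ ∈ H := by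
      rw [← QuotientGroup.eq]; exact hi
    have := hy i ⟨(gr i)⁻¹ * g⁻¹, hmem⟩⁻¹
    convert this using 2 with f
    simp [shift, mul_assoc]
end

section
/- Let A be a finite set, G a group, H ≤ G a subgroup, F ⊆ H a finite subset and L ⊆ A^F. Let X ⊆ A^G and Y ⊆ A^H be the SFTs defined by (F, L) on G and on H respectively, and let (g_i)_{i ∈ I} be a complete set of left coset representatives of H in G. If x ∈ A^G is such that for every i ∈ I the configuration y_i ∈ A^H defined by y_i(h) = x(g_i h) belongs to Y, then x ∈ X. -/
variable {G A : Type*}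

/-- If every coset restriction of `x` (through a complete set of left coset
representatives) lies in the SFT `Y` defined by `(F, L)` on `H`, then `x` lies in the SFT `X`
defined by `(F, L)` on `G`. -/
theorem mem_sft_of_coset_restrictions_mem
    [Group G] [Finite A] (H : Subgroup G) (F : Set G) (hFfin : F.Finite)
    (hF : F ⊆ (H : Set G)) (L : Set (F → A))
    {ι : Type*} (gr : ι → G)
    (hrep : Function.Bijective (fun i : ι => (QuotientGroup.mk (gr i) : G ⧸ H)))
    (x : G → A) (hx : ∀ i : ι, (fun h : ↥H => x (gr i * h)) ∈ SFTon H F hF L) :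
    x ∈ SFT F L := by
  intro g
  obtain ⟨i, hi⟩ := hrep.2 (QuotientGroup.mk g⁻¹)
  have hm : (gr i)⁻¹ * g⁻¹ ∈ H := (QuotientGroup.eq).mp hi
  have key := hx i (⟨(gr i)⁻¹ * g⁻¹, hm⟩ : H)⁻¹
  refine Set.mem_of_eq_of_mem ?_ key
  funext f
  simp [shift, mul_assoc]
end

section
/- Let A be a finite set, G a group, H ≤ G a subgroup, F ⊆ H a finite subset and L ⊆ A^F. Let X ⊆ A^G and Y ⊆ A^H be the SFTs defined by (F, L) on G and on H respectively, and assume both X and Y are nonempty. Then for every g ∈ G, g belongs to Free(X) if and only if Cl(g) ∩ R_G(Free(Y)) ≠ ∅, i.e. if and only if there exist t ∈ G and an integer n > 0 such that (t g t⁻¹)^n lies in Free(Y). -/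
variable {G A : Type*}

/-!
If a conjugate power `k = (t g t⁻¹)ⁿ ∈ H` acts freely on `Y`, then `g` acts freely on `X`: a point
of `X` fixed by `g`, shifted by `t` and restricted to `H`, is a point of `Y` fixed by `k`.

Conversely, a configuration on `G` lies in `X` iff its restriction to every left coset `uH` lies
in `Y`. A `g`-invariant configuration is determined on a double coset `⟨g⟩σH` by its restriction
to `σH`, and this may be any point of `Y` invariant under the cyclic group `H ∩ σ⁻¹⟨g⟩σ`. A
generator of that group is, up to inversion, a conjugate power of `g`, so if none of these is
free on `Y` such points exist for every `σ`, and gluing them gives a point of `X` fixed by `g`.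
-/

open Subgroup

section Shift

variable [Group G]

@[simp] lemma shift_apply (g : G) (x : G → A) (h : G) : shift g x h = x (g⁻¹ * h) := rfl

lemma shift_one (x : G → A) : shift 1 x = x := by
  funext h; simp

lemma shift_mul (a b : G) (x : G → A) : shift (a * b) x = shift a (shift b x) := by
  funext h; simp [mul_assoc]

def shiftStabilizer (x : G → A) : Subgroup G where
  carrier := {g | shift g x = x}
  one_mem' := shift_one x
  mul_mem' {a b} (ha : shift a x = x) (hb : shift b x = x) :=
    show shift (a * b) x = x by rw [shift_mul, hb, ha]
  inv_mem' {a} (ha : shift a x = x) :=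
    show shift a⁻¹ x = x by conv_lhs => rw [← ha, ← shift_mul, inv_mul_cancel, shift_one]

lemma mem_shiftStabilizer {g : G} {x : G → A} : g ∈ shiftStabilizer x ↔ shift g x = x := Iff.rfl

lemma conj_mem_shiftStabilizer_shift {g : G} {x : G → A} (hg : g ∈ shiftStabilizer x) (t : G) :
    t * g * t⁻¹ ∈ shiftStabilizer (shift t x) := by
  rw [mem_shiftStabilizer, ← shift_mul, inv_mul_cancel_right, shift_mul, hg]

lemma mem_shiftStabilizer_restrict {H : Subgroup G} {x : G → A} {k : H}
    (hk : (k : G) ∈ shiftStabilizer x) : k ∈ shiftStabilizer (fun h : H => x h) := by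
  funext h
  simpa using congrFun hk h

lemma notMem_freePart_iff {X : Set (G → A)} {g : G} :
    g ∉ freePart X ↔ ∃ x ∈ X, g ∈ shiftStabilizer x := by
  simp [freePart, mem_shiftStabilizer]

lemma one_notMem_freePart {X : Set (G → A)} (hX : X.Nonempty) : (1 : G) ∉ freePart X :=
  notMem_freePart_iff.2 (hX.imp fun _ hx => ⟨hx, one_mem _⟩)

lemma inv_mem_freePart_iff {X : Set (G → A)} {g : G} : g⁻¹ ∈ freePart X ↔ g ∈ freePart X := by
  simp only [← not_iff_not, notMem_freePart_iff, inv_mem_iff]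

end Shift

section SFT

variable [Group G] {H : Subgroup G} {F : Set G} {L : Set (F → A)}

lemma mem_SFT_iff_forall_mem_SFTon (hF : F ⊆ H) {x : G → A} :
    x ∈ SFT F L ↔ ∀ u : G, (fun h : H => x (u * h)) ∈ SFTon H F hF L := by
  refine ⟨fun hx u h => ?_, fun hx g => ?_⟩
  · convert hx (u * h⁻¹)⁻¹ using 2
    simp [mul_assoc]
  · simpa using hx g⁻¹ 1

lemma shift_mem_SFTon (hF : F ⊆ H) {y : H → A} (hy : y ∈ SFTon H F hF L) (a : H) :
    shift a y ∈ SFTon H F hF L := by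
  intro h
  simpa [mul_assoc] using hy (h * a)

end SFT

section Gluing

variable [Group G] {K H : Subgroup G}

lemma apply_eq_apply_of_mul_eq_mul {σ : G} {y : H → A}
    (hy : ∀ k : H, σ * k * σ⁻¹ ∈ K → k ∈ shiftStabilizer y) {k k' : G} (hk : k ∈ K)
    (hk' : k' ∈ K) {h h' : H} (he : k * σ * h = k' * σ * h') : y h = y h' := by
  have hc : σ * ↑(h' * h⁻¹) * σ⁻¹ = k'⁻¹ * k := by
    simp only [coe_mul, coe_inv]
    rw [eq_inv_mul_iff_mul_eq, ← mul_assoc, ← mul_assoc, ← mul_assoc, ← he]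
    group
  have hfix := congrFun (hy _ (hc ▸ K.mul_mem (K.inv_mem hk') hk)) h'
  simpa using hfix

lemma exists_le_shiftStabilizer_of_forall_conj_mem (y : G → H → A)
    (hy : ∀ (σ : G) (k : H), σ * k * σ⁻¹ ∈ K → k ∈ shiftStabilizer (y σ)) :
    ∃ x : G → A, K ≤ shiftStabilizer x ∧
      ∀ u : G, ∃ σ : G, ∃ h₀ : H, (fun h : H => x (u * h)) = shift h₀ (y σ) := by
  classical
  let rep : G → G := fun v => (DoubleCoset.mk K H v).out
  have decomp : ∀ v, ∃ k ∈ K, ∃ h : H, v = k * rep v * h := by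
    intro v
    obtain ⟨k, hk, h, hh, e⟩ := (DoubleCoset.eq K H (rep v) v).1 (DoubleCoset.out_eq' K H _)
    exact ⟨k, hk, ⟨h, hh⟩, e⟩
  choose κ hκ η hη using decomp
  let x : G → A := fun v => y (rep v) (η v)
  have hx : ∀ v, ∀ k ∈ K, ∀ h : H, x (k * rep v * h) = y (rep v) h := by
    intro v k hk h
    have hrep : rep (k * rep v * h) = rep v := congrArg Quotient.out <|
      ((DoubleCoset.eq K H _ _).2 ⟨k, hk, h, h.2, rfl⟩).symm.trans (DoubleCoset.out_eq' K H _)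
    have hw := hη (k * rep v * h)
    rw [hrep] at hw
    show y (rep (k * rep v * h)) (η (k * rep v * h)) = _
    rw [hrep]
    exact apply_eq_apply_of_mul_eq_mul (hy (rep v)) (hκ _) hk hw.symm
  refine ⟨x, fun k hk => funext fun v => ?_, fun u => ⟨rep u, (η u)⁻¹, funext fun h => ?_⟩⟩
  · calc shift k x v = x (k⁻¹ * κ v * rep v * η v) := by
          conv_lhs => rw [hη v]
          simp only [shift_apply, mul_assoc]
      _ = x v := by
          rw [hx v _ (K.mul_mem (K.inv_mem hk) (hκ v))]
  · calc x (u * h) = x (κ u * rep u * ↑(η u * h)) := by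
          conv_lhs => rw [hη u]
          simp only [coe_mul, mul_assoc]
      _ = shift (η u)⁻¹ (y (rep u)) h := by
          rw [hx u _ (hκ u)]
          simp

end Gluing

section Cyclic

variable [Group G] {H : Subgroup G} {Y : Set (H → A)}

lemma notMem_freePart_of_coe_eq_zpow (hY : Y.Nonempty) {b : G}
    (hb : ∀ n : ℕ, 0 < n → ∀ k : H, (k : G) = b ^ n → k ∉ freePart Y) {k : H} {m : ℤ}
    (hk : (k : G) = b ^ m) : k ∉ freePart Y := by
  obtain rfl | hm := eq_or_ne m 0
  · rw [zpow_zero, OneMemClass.coe_eq_one] at hk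
    exact hk ▸ one_notMem_freePart hY
  obtain ⟨n, rfl | rfl⟩ := Int.eq_nat_or_neg m
  · exact hb n (by omega) k (by simpa using hk)
  · rw [← inv_mem_freePart_iff]
    exact hb n (by omega) k⁻¹ (by simp [hk])

lemma exists_mem_forall_zpowers_mem_shiftStabilizer (hY : Y.Nonempty) {b : G}
    (hb : ∀ n : ℕ, 0 < n → ∀ k : H, (k : G) = b ^ n → k ∉ freePart Y) :
    ∃ y ∈ Y, ∀ k : H, (k : G) ∈ zpowers b → k ∈ shiftStabilizer y := by
  have : IsCyclic ↥(zpowers b ⊓ H) := isCyclic_of_le inf_le_left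
  obtain ⟨c, hc⟩ := (zpowers b ⊓ H).isCyclic_iff_exists_zpowers_eq_top.1 this
  have hcb : c ∈ zpowers b ⊓ H := hc ▸ mem_zpowers c
  obtain ⟨m, hm⟩ := mem_zpowers_iff.1 (mem_inf.1 hcb).1
  obtain ⟨y, hyY, hcy⟩ := notMem_freePart_iff.1
    (notMem_freePart_of_coe_eq_zpow hY hb (k := ⟨c, (mem_inf.1 hcb).2⟩) hm.symm)
  refine ⟨y, hyY, fun k hk => ?_⟩
  obtain ⟨j, hj⟩ := mem_zpowers_iff.1 (hc ▸ mem_inf.2 ⟨hk, k.2⟩ : (k : G) ∈ zpowers c)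
  have : k = ⟨c, (mem_inf.1 hcb).2⟩ ^ j := Subtype.ext (by simp [hj])
  exact this ▸ zpow_mem hcy j

end Cyclic

lemma mem_zpowers_conj_of_conj_mem [Group G] {σ g k : G} (hk : σ * k * σ⁻¹ ∈ zpowers g) :
    k ∈ zpowers (σ⁻¹ * g * σ) := by
  obtain ⟨m, hm⟩ := mem_zpowers_iff.1 hk
  exact ⟨m, by simpa [hm, mul_assoc] using conj_zpow (a := σ⁻¹) (b := g) (i := m)⟩

theorem mem_freePart_iff_conj_root_mem_freePart_general
    [Group G] (H : Subgroup G) (F : Set G)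
    (hF : F ⊆ (H : Set G)) (L : Set (F → A))
    (hY : (SFTon H F hF L).Nonempty) (g : G) :
    g ∈ freePart (SFT F L) ↔
      ∃ t : G, ∃ n : ℕ, 0 < n ∧
        ∃ k : ↥H, (k : G) = (t * g * t⁻¹) ^ n ∧ k ∈ freePart (SFTon H F hF L) := by
  constructor
  · intro hg
    by_contra! hcon
    have hσ : ∀ σ : G, ∃ y ∈ SFTon H F hF L,
        ∀ k : H, σ * k * σ⁻¹ ∈ zpowers g → k ∈ shiftStabilizer y := by
      intro σ
      obtain ⟨y, hyY, hy⟩ :=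
        exists_mem_forall_zpowers_mem_shiftStabilizer hY (by simpa only [inv_inv] using hcon σ⁻¹)
      exact ⟨y, hyY, fun k hk => hy k (mem_zpowers_conj_of_conj_mem hk)⟩
    choose y hyY hy using hσ
    obtain ⟨x, hxg, hx⟩ := exists_le_shiftStabilizer_of_forall_conj_mem y hy
    refine hg x ((mem_SFT_iff_forall_mem_SFTon hF).2 fun u => ?_) (hxg (mem_zpowers g))
    obtain ⟨σ, h₀, e⟩ := hx u
    exact e ▸ shift_mem_SFTon hF (hyY σ) h₀
  · rintro ⟨t, n, -, k, hk, hkfree⟩ x hx hgx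
    refine hkfree (fun h : H => shift t x h) ((mem_SFT_iff_forall_mem_SFTon hF).1 hx t⁻¹) ?_
    apply mem_shiftStabilizer_restrict
    rw [hk]
    exact pow_mem (conj_mem_shiftStabilizer_shift hgx t) n

/-- For nonempty SFTs `X` on `G` and `Y` on `H` defined by the same data
`(F, L)`, an element `g ∈ G` lies in the free part of `X` iff some conjugate of `g` has a
positive power lying in the free part of `Y`. -/
theorem mem_freePart_iff_conj_root_mem_freePart
    [Group G] [Finite A] (H : Subgroup G) (F : Set G) (hFfin : F.Finite)
    (hF : F ⊆ (H : Set G)) (L : Set (F → A))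
    (hX : (SFT F L).Nonempty) (hY : (SFTon H F hF L).Nonempty) (g : G) :
    g ∈ freePart (SFT F L) ↔
      ∃ t : G, ∃ n : ℕ, 0 < n ∧
        ∃ k : ↥H, (k : G) = (t * g * t⁻¹) ^ n ∧ k ∈ freePart (SFTon H F hF L) :=
  mem_freePart_iff_conj_root_mem_freePart_general H F hF L hY g
end

section
/- Every nonempty subshift of finite type over the group ℤ contains a periodic configuration: if A is a finite set, F ⊆ ℤ is finite, L ⊆ A^F, and the SFT X ⊆ A^ℤ defined by (F, L) is nonempty, then there exist x ∈ X and an integer m > 0 such that m·x = x. -/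
variable {A : Type*}

/-- The shift action of `ℤ` on configurations: `(shiftZ m x) k = x (k - m)`. -/
def shiftZ (m : ℤ) (x : ℤ → A) : ℤ → A := fun k => x (k - m)

/-- The subshift of finite type on `ℤ` defined by the shape `F` and the pattern set `L`. -/
def SFTZ (F : Set ℤ) (L : Set (F → A)) : Set (ℤ → A) :=
  {x | ∀ m : ℤ, (fun f : F => shiftZ m x f) ∈ L}

lemma sft_aux (F : Set ℤ) (L : Set (F → A)) (N : ℕ)
    (hF : ∀ f : F, -(N : ℤ) ≤ (f : ℤ) ∧ (f : ℤ) ≤ N)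
    (x : ℤ → A) (hx : x ∈ SFTZ F L) (i j : ℤ) (hij : i < j)
    (hagree : ∀ u : ℤ, -(N : ℤ) ≤ u → u ≤ N → x (i + u) = x (j + u)) :
    ∃ y ∈ SFTZ F L, ∃ m : ℤ, 0 < m ∧ shiftZ m y = y := by
  set p : ℤ := j - i with hp'
  have hp : 0 < p := by omega
  set y : ℤ → A := fun k => x (i + (k - i) % p) with hy
  -- key claim
  have key : ∀ n : ℕ, ∀ u : ℤ, u.natAbs ≤ n → -(N : ℤ) ≤ u → u < p + N →
      x (i + u % p) = x (i + u) := by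
    intro n
    induction n with
    | zero =>
      intro u hu _ _
      have : u = 0 := by omega
      subst this
      simp
    | succ n ih =>
      intro u hu h1 h2
      by_cases h0 : 0 ≤ u ∧ u < p
      · rw [Int.emod_eq_of_lt h0.1 h0.2]
      · by_cases hup : p ≤ u
        · have hag := hagree (u - p) (by omega) (by omega)
          have e1 : j + (u - p) = i + u := by omega
          have e2 : (u - p) % p = u % p := by
            rw [show u - p = u + p * (-1) by ring, Int.add_mul_emod_self_left]
          rw [← e2, ih (u - p) (by omega) (by omega) (by omega), hag, e1]
        · have hu0 : u < 0 := by omega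
          have hag := hagree u (by omega) (by omega)
          have e1 : j + u = i + (u + p) := by omega
          have e2 : (u + p) % p = u % p := by
            rw [show u + p = u + p * 1 by ring, Int.add_mul_emod_self_left]
          by_cases hup2 : 0 ≤ u + p
          · rw [← e2, Int.emod_eq_of_lt hup2 (by omega), ← e1, ← hag]
          · rw [← e2, ih (u + p) (by omega) (by omega) (by omega), ← e1, ← hag]
  refine ⟨y, ?_, p, hp, ?_⟩
  · intro m
    set s : ℤ := (-m - i) % p with hs'
    have hs0 : 0 ≤ s := Int.emod_nonneg _ (by omega)
    have hsp : s < p := Int.emod_lt_of_pos _ hp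
    have hwin : ∀ t : ℤ, -(N : ℤ) ≤ t → t ≤ N → y (-m + t) = x (i + s + t) := by
      intro t h1 h2
      have e0 : (-m + t - i) % p = (s + t) % p := by
        rw [show -m + t - i = s + t + p * ((-m - i) / p) by
            rw [hs']; linarith [Int.emod_add_mul_ediv (-m - i) p],
          Int.add_mul_emod_self_left]
      have e3 : x (i + (s + t) % p) = x (i + (s + t)) :=
        key (s + t).natAbs (s + t) le_rfl (by omega) (by omega)
      calc y (-m + t) = x (i + (-m + t - i) % p) := rfl
        _ = x (i + (s + t) % p) := by rw [e0]
        _ = x (i + s + t) := by rw [e3, add_assoc]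
    have := hx (-(i + s))
    convert this using 1
    funext f
    have hf := hF f
    have := hwin f hf.1 hf.2
    show y ((f : ℤ) - m) = x ((f : ℤ) - -(i + s))
    rw [show (f : ℤ) - m = -m + f by ring, this]
    congr 1
    ring
  · funext k
    show y (k - p) = y k
    have : (k - p - i) % p = (k - i) % p := by
      rw [show k - p - i = k - i + p * (-1) by ring, Int.add_mul_emod_self_left]
    simp only [hy, this]

/-- Every nonempty SFT over `ℤ` contains a configuration which is periodic
with some positive period. -/
theorem exists_periodic_of_nonempty_sft_int
    [Finite A] (F : Set ℤ) (hFfin : F.Finite) (L : Set (F → A))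
    (hne : (SFTZ F L).Nonempty) :
    ∃ x ∈ SFTZ F L, ∃ m : ℤ, 0 < m ∧ shiftZ m x = x := by
  obtain ⟨x, hx⟩ := hne
  set N : ℕ := hFfin.toFinset.sup fun f => f.natAbs with hN
  have hFb : ∀ f : F, -(N : ℤ) ≤ (f : ℤ) ∧ (f : ℤ) ≤ N := by
    intro f
    have : (f : ℤ).natAbs ≤ N := Finset.le_sup (hFfin.mem_toFinset.mpr f.2)
    omega
  obtain ⟨i, j, hij, hW⟩ := Finite.exists_ne_map_eq_of_infinite
    (fun m : ℤ => fun t : Fin (2 * N + 1) => x (m + (t.1 : ℤ) - N))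
  have hag : ∀ u : ℤ, -(N : ℤ) ≤ u → u ≤ N → x (i + u) = x (j + u) := by
    intro u h1 h2
    have hc : ((u + N).toNat : ℤ) = u + N := Int.toNat_of_nonneg (by omega)
    have h := congrFun hW (⟨(u + (N : ℤ)).toNat, by omega⟩ : Fin (2 * N + 1))
    simp only at h
    rw [hc] at h
    rw [show i + u = i + (u + (N : ℤ)) - N by ring, show j + u = j + (u + (N : ℤ)) - N by ring]
    exact h
  rcases hij.lt_or_gt with h | h
  · exact sft_aux F L N hFb x hx i j h hag
  · exact sft_aux F L N hFb x hx j i h (fun u h1 h2 => (hag u h1 h2).symm)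
end

section
/- The group ℤ admits no nonempty strongly aperiodic subshift of finite type: for every finite set A, finite F ⊆ ℤ and L ⊆ A^F, if the SFT X ⊆ A^ℤ defined by (F, L) is nonempty, then X is not strongly aperiodic. -/
variable {A : Type*}

/-- `ℤ` admits no nonempty strongly aperiodic SFT: any nonempty SFT on `ℤ`
fails strong aperiodicity. -/
theorem no_SA_SFT_int
    [Finite A] (F : Set ℤ) (hFfin : F.Finite) (L : Set (F → A))
    (hne : (SFTZ F L).Nonempty) :
    ¬ (∀ x ∈ SFTZ F L, ∀ m : ℤ, shiftZ m x = x → m = 0) := by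
  intro hSA
  obtain ⟨x, hx⟩ := hne
  -- A bound `N` for the shape `F`
  obtain ⟨N, hN0, hN⟩ : ∃ N : ℤ, 0 ≤ N ∧ ∀ f ∈ F, -N ≤ f ∧ f ≤ N := by
    obtain ⟨C, hC⟩ := (hFfin.image abs).bddAbove
    refine ⟨max C 0, le_max_right _ _, fun f hf => ?_⟩
    have h1 : |f| ≤ C := hC (Set.mem_image_of_mem _ hf)
    have h2 := neg_abs_le f
    have h3 := le_abs_self f
    have h4 := le_max_left C 0
    constructor <;> linarith
  -- the main argument, for `a < b` with equal windows
  have key : ∀ a b : ℤ, a < b →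
      ((fun j : Set.Icc (-N) N => x (a * (N + 1) + (j : ℤ))) =
       (fun j : Set.Icc (-N) N => x (b * (N + 1) + (j : ℤ)))) → False := by
    intro a b hab hW
    set a' : ℤ := a * (N + 1) with ha'
    set p : ℤ := (b - a) * (N + 1) with hpdef
    have hba : 1 ≤ b - a := by omega
    have hp : N < p := by nlinarith
    have hp0 : 0 < p := lt_of_le_of_lt hN0 hp
    -- window equality
    have hw : ∀ j : ℤ, -N ≤ j → j ≤ N → x (a' + j) = x (a' + p + j) := by
      intro j h1 h2
      have h := congrFun hW (⟨j, ⟨h1, h2⟩⟩ : Set.Icc (-N) N)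
      simp only at h
      have e : a' + p + j = b * (N + 1) + j := by rw [ha', hpdef]; ring
      rw [e]
      exact h
    -- the periodic configuration
    set y : ℤ → A := fun k => x (a' + (k - a') % p) with hydef
    -- key claim: windows of `y` are windows of `x`
    have claim : ∀ k f : ℤ, -N ≤ f → f ≤ N →
        y (k + f) = x (a' + (k - a') % p + f) := by
      intro k f h1 h2
      set r : ℤ := (k - a') % p with hr
      have hr0 : 0 ≤ r := Int.emod_nonneg _ (ne_of_gt hp0)
      have hrp : r < p := Int.emod_lt_of_pos _ hp0
      have hmod : (k + f - a') % p = (r + f) % p := by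
        have e : k + f - a' = (r + f) + p * ((k - a') / p) := by
          rw [hr]
          have := Int.emod_add_mul_ediv (k - a') p
          linarith
        rw [e, Int.add_mul_emod_self_left]
      show x (a' + (k + f - a') % p) = x (a' + r + f)
      rw [hmod]
      by_cases hc1 : r + f < 0
      · have e1 : (r + f) % p = r + f + p := by
          rw [← Int.add_mul_emod_self_left (a := r + f) (b := p) (c := 1)]
          rw [mul_one, Int.emod_eq_of_lt (by linarith) (by linarith)]
        rw [e1]
        have h := hw (r + f) (by linarith) (by linarith)
        have e2 : a' + (r + f + p) = a' + p + (r + f) := by ring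
        rw [e2, ← h]
        congr 1; ring
      · by_cases hc2 : r + f < p
        · rw [Int.emod_eq_of_lt (by linarith) hc2]
          congr 1; ring
        · have e1 : (r + f) % p = r + f - p := by
            have e : (r + f) % p = (r + f - p) % p := by
              conv_lhs => rw [show r + f = (r + f - p) + p * 1 by ring,
                Int.add_mul_emod_self_left]
            rw [e, Int.emod_eq_of_lt (by linarith) (by linarith)]
          rw [e1]
          have h := hw (r + f - p) (by linarith) (by linarith)
          rw [h]
          congr 1; ring
    -- `y` is in the SFT
    have hy : y ∈ SFTZ F L := by
      intro m
      set m' : ℤ := -(a' + (-m - a') % p) with hm'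
      have e : (fun f : F => shiftZ m y f) = (fun f : F => shiftZ m' x f) := by
        funext f
        have hf := hN f f.2
        have h1 := claim (-m) f hf.1 hf.2
        show y ((f : ℤ) - m) = x ((f : ℤ) - m')
        rw [show ((f : ℤ) - m) = -m + (f : ℤ) by ring, h1]
        congr 1
        rw [hm']; ring
      rw [e]
      exact hx m'
    -- `y` is `p`-periodic
    have hper : shiftZ p y = y := by
      funext k
      show y (k - p) = y k
      rw [hydef]
      simp only
      congr 2
      rw [show k - p - a' = (k - a') + p * (-1) by ring]
      exact Int.add_mul_emod_self_left _ _ _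
    have := hSA y hy p hper
    omega
  -- pigeonhole: two equal windows exist
  haveI : Finite (Set.Icc (-N) N) := (Set.finite_Icc (-N) N).to_subtype
  obtain ⟨a, b, hab, hW⟩ :=
    Finite.exists_ne_map_eq_of_infinite
      (fun m : ℤ => (fun j : Set.Icc (-N) N => x (m * (N + 1) + (j : ℤ))))
  rcases lt_or_gt_of_ne hab with h | h
  · exact key a b h hW
  · exact key b a h hW.symm
end

section
/- Let A be a finite set and let Y ⊆ A^{ℤ²} be a nonempty strongly aperiodic SFT defined by a finite set F ⊆ ℤ² and L ⊆ A^F. Regarding ℤ² as a subgroup of ℚ², let X ⊆ A^{ℚ²} be the set of configurations x such that for every s ∈ ℚ² the restriction of s·x to ℤ² lies in Y. Then X equals the SFT on ℚ² defined by (F, L), X is nonempty, and X is strongly aperiodic. In particular, if ℤ² admits a nonempty strongly aperiodic SFT, then the non-finitely generated group ℚ² admits a nonempty strongly aperiodic SFT. -/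
variable {A : Type*}

/-- The canonical embedding of `ℤ²` into `ℚ²`. -/
def ι : ℤ × ℤ → ℚ × ℚ := fun v => ((v.1 : ℚ), (v.2 : ℚ))

/-- The shift action of `ℤ²` on configurations: `(shiftZ2 v y) k = y (k - v)`. -/
def shiftZ2 (v : ℤ × ℤ) (y : ℤ × ℤ → A) : ℤ × ℤ → A := fun k => y (k - v)

/-- The shift action of `ℚ²` on configurations: `(shiftQ2 q x) h = x (h - q)`. -/
def shiftQ2 (q : ℚ × ℚ) (x : ℚ × ℚ → A) : ℚ × ℚ → A := fun h => x (h - q)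

/-- The SFT on `ℤ²` defined by the shape `F` and the pattern set `L`. -/
def SFTonZ2 (F : Set (ℤ × ℤ)) (L : Set (F → A)) : Set (ℤ × ℤ → A) :=
  {y | ∀ v : ℤ × ℤ, (fun f : F => shiftZ2 v y f) ∈ L}

/-- The SFT on `ℚ²` defined by the shape `F ⊆ ℤ² ⊆ ℚ²` and the pattern set `L`. -/
def SFTonQ2 (F : Set (ℤ × ℤ)) (L : Set (F → A)) : Set (ℚ × ℚ → A) :=
  {x | ∀ s : ℚ × ℚ, (fun f : F => shiftQ2 s x (ι f)) ∈ L}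

lemma iota_sub (v w : ℤ × ℤ) : ι (v - w) = ι v - ι w := by
  simp [ι, Prod.ext_iff]

lemma shiftQ2_add (p q : ℚ × ℚ) (x : ℚ × ℚ → A) :
    shiftQ2 (p + q) x = shiftQ2 q (shiftQ2 p x) := by
  funext h
  simp [shiftQ2, sub_sub, add_comm]

lemma rat_mul_den (q : ℚ) : q * (q.den : ℚ) = (q.num : ℚ) := by
  have hd : (q.den : ℚ) ≠ 0 := by exact_mod_cast q.den_ne_zero
  have h := Rat.num_div_den q
  rw [div_eq_iff hd] at h
  exact h.symm

/-- If `Y ⊆ A^{ℤ²}` is a nonempty strongly aperiodic SFT defined by `(F, L)`,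
then the set `X` of configurations on `ℚ²` all of whose `ℤ²`-restrictions of translates lie in
`Y` equals the SFT on `ℚ²` defined by `(F, L)`, and it is nonempty and strongly aperiodic. -/
theorem Q2_SA_SFT_of_Z2_SA_SFT
    [Finite A] (F : Set (ℤ × ℤ)) (hFfin : F.Finite) (L : Set (F → A))
    (hYne : (SFTonZ2 F L).Nonempty)
    (hYSA : ∀ y ∈ SFTonZ2 F L, ∀ v : ℤ × ℤ, shiftZ2 v y = y → v = 0) :
    {x : ℚ × ℚ → A | ∀ s : ℚ × ℚ, (fun v : ℤ × ℤ => shiftQ2 s x (ι v)) ∈ SFTonZ2 F L}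
        = SFTonQ2 F L ∧
    ({x : ℚ × ℚ → A | ∀ s : ℚ × ℚ,
        (fun v : ℤ × ℤ => shiftQ2 s x (ι v)) ∈ SFTonZ2 F L}).Nonempty ∧
    ∀ x ∈ {x : ℚ × ℚ → A | ∀ s : ℚ × ℚ,
        (fun v : ℤ × ℤ => shiftQ2 s x (ι v)) ∈ SFTonZ2 F L},
      ∀ q : ℚ × ℚ, shiftQ2 q x = x → q = 0 := by
  refine ⟨?_, ?_, ?_⟩
  · ext x
    simp only [Set.mem_setOf_eq, SFTonQ2, SFTonZ2]
    constructor
    · intro h s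
      have := h s 0
      simpa [shiftZ2] using this
    · intro h s v
      have := h (s + ι v)
      convert this using 1
      funext f
      simp only [shiftZ2, shiftQ2, iota_sub]
      congr 1
      abel
  · obtain ⟨y, hy⟩ := hYne
    refine ⟨fun p => y (⌊p.1⌋, ⌊p.2⌋), ?_⟩
    intro s v
    have key : (fun f : F => shiftZ2 v
          (fun k : ℤ × ℤ => shiftQ2 s (fun p : ℚ × ℚ => y (⌊p.1⌋, ⌊p.2⌋)) (ι k)) f)
        = (fun f : F => shiftZ2 (v - (⌊-s.1⌋, ⌊-s.2⌋)) y f) := by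
      funext f
      simp only [shiftZ2, shiftQ2, ι]
      congr 1
      simp only [Prod.sub_def]
      have e1 : (((f : ℤ × ℤ).1 - v.1 : ℤ) : ℚ) - s.1
          = (((f : ℤ × ℤ).1 - v.1 : ℤ) : ℚ) + (-s.1) := by ring
      have e2 : (((f : ℤ × ℤ).2 - v.2 : ℤ) : ℚ) - s.2
          = (((f : ℤ × ℤ).2 - v.2 : ℤ) : ℚ) + (-s.2) := by ring
      rw [e1, e2, Int.floor_intCast_add, Int.floor_intCast_add]
      simp [Prod.ext_iff]
      omega
    rw [key]
    exact hy _
  · intro x hx q hq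
    have hiter : ∀ n : ℕ, shiftQ2 (n • q) x = x := by
      intro n
      induction n with
      | zero => funext h; simp [shiftQ2]
      | succ n ih => rw [succ_nsmul, shiftQ2_add, ih, hq]
    set n : ℕ := q.1.den * q.2.den with hn
    set w : ℤ × ℤ := (q.1.num * q.2.den, q.2.num * q.1.den) with hw
    have hιw : ι w = n • q := by
      have e1 : ((q.1.num * (q.2.den : ℤ) : ℤ) : ℚ) = (n : ℚ) * q.1 := by
        rw [hn]
        push_cast
        rw [← rat_mul_den q.1]
        ring
      have e2 : ((q.2.num * (q.1.den : ℤ) : ℤ) : ℚ) = (n : ℚ) * q.2 := by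
        rw [hn]
        push_cast
        rw [← rat_mul_den q.2]
        ring
      simp only [ι, hw, Prod.ext_iff, Prod.smul_def, smul_eq_mul, nsmul_eq_mul]
      exact ⟨e1, e2⟩
    have hy : (fun v : ℤ × ℤ => shiftQ2 0 x (ι v)) ∈ SFTonZ2 F L := hx 0
    have hper : shiftZ2 w (fun v : ℤ × ℤ => shiftQ2 0 x (ι v))
        = fun v : ℤ × ℤ => shiftQ2 0 x (ι v) := by
      funext v
      simp only [shiftZ2, shiftQ2, iota_sub, sub_zero, hιw]
      have := congrFun (hiter n) (ι v)
      simpa [shiftQ2] using this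
    have hw0 : w = 0 := hYSA _ hy w hper
    have hn0 : (n : ℚ) ≠ 0 := by
      simp [hn, q.1.den_ne_zero, q.2.den_ne_zero]
    rw [hw0] at hιw
    have h1 : (n : ℚ) * q.1 = 0 := by
      have := congrArg Prod.fst hιw
      simpa [ι, Prod.smul_def, nsmul_eq_mul] using this.symm
    have h2 : (n : ℚ) * q.2 = 0 := by
      have := congrArg Prod.snd hιw
      simpa [ι, Prod.smul_def, nsmul_eq_mul] using this.symm
    have hq1 : q.1 = 0 := (mul_eq_zero.mp h1).resolve_left hn0
    have hq2 : q.2 = 0 := (mul_eq_zero.mp h2).resolve_left hn0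
    exact Prod.ext hq1 hq2
end

section
/- Let A be a finite set and Y ⊆ A^{ℤ²} a strongly aperiodic subshift (i.e. for y ∈ Y and v ∈ ℤ², v·y = y implies v = 0). Let x : ℚ² → A be a configuration such that for every s ∈ ℚ² the restriction of s·x to ℤ² lies in Y. If q ∈ ℚ² satisfies q·x = x, then q = 0. -/
variable {A : Type*}

/-- If `Y ⊆ A^{ℤ²}` is strongly aperiodic and `x : ℚ² → A` is such that the
`ℤ²`-restriction of every translate of `x` lies in `Y`, then any `q ∈ ℚ²` fixing `x` is zero. -/
theorem eq_zero_of_fixes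
    [Finite A] (Y : Set (ℤ × ℤ → A))
    (hYSA : ∀ y ∈ Y, ∀ v : ℤ × ℤ, shiftZ2 v y = y → v = 0)
    (x : ℚ × ℚ → A)
    (hx : ∀ s : ℚ × ℚ, (fun v : ℤ × ℤ => shiftQ2 s x (ι v)) ∈ Y)
    (q : ℚ × ℚ) (hq : shiftQ2 q x = x) : q = 0 := by
  -- x is fixed by every natural multiple of q
  have hn : ∀ n : ℕ, shiftQ2 (n • q) x = x := by
    intro n
    induction n with
    | zero => funext h; simp [shiftQ2]
    | succ n ih =>
      have : (n + 1) • q = n • q + q := succ_nsmul q n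
      rw [this]
      funext h
      calc x (h - (n • q + q)) = x (h - n • q - q) := by rw [sub_sub]
        _ = x (h - n • q) := congrFun hq _
        _ = x h := congrFun ih h
  set v : ℤ × ℤ := (q.1.num * q.2.den, q.2.num * q.1.den) with hv
  set n : ℕ := q.1.den * q.2.den with hndef
  have hιv : ι v = n • q := by
    have h1 : ((q.1.num * q.2.den : ℤ) : ℚ) = (n : ℚ) * q.1 := by
      push_cast [hndef]
      rw [mul_comm (q.1.den : ℚ), mul_assoc, Rat.den_mul_eq_num]; ring
    have h2 : ((q.2.num * q.1.den : ℤ) : ℚ) = (n : ℚ) * q.2 := by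
      push_cast [hndef]
      rw [mul_assoc, Rat.den_mul_eq_num]; ring
    have : (n • q : ℚ × ℚ) = ((n : ℚ) * q.1, (n : ℚ) * q.2) := by
      ext <;> simp [Prod.smul_fst, Prod.smul_snd, nsmul_eq_mul]
    rw [this]
    simp [ι, hv, h1, h2]
  have hfix : shiftQ2 (ι v) x = x := by rw [hιv]; exact hn n
  have hv0 : v = 0 := by
    refine hYSA _ (hx 0) v ?_
    funext k
    have hik : ι (k - v) = ι k - ι v := by simp [ι, Prod.ext_iff]
    have := congrFun hfix (ι k)
    simp only [shiftZ2, shiftQ2, hik, sub_zero] at *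
    exact this
  have h1 : q.1 = 0 := by
    have : q.1.num * q.2.den = 0 := congrArg Prod.fst hv0
    rcases mul_eq_zero.mp this with h | h
    · exact Rat.num_eq_zero.mp h
    · exact absurd h (by exact_mod_cast q.2.den_ne_zero)
  have h2 : q.2 = 0 := by
    have : q.2.num * q.1.den = 0 := congrArg Prod.snd hv0
    rcases mul_eq_zero.mp this with h | h
    · exact Rat.num_eq_zero.mp h
    · exact absurd h (by exact_mod_cast q.1.den_ne_zero)
  exact Prod.ext h1 h2
end

section
/- Let G be a group with exactly two conjugacy classes (the class of the identity and one other) and let t ∈ G be an element of infinite order. Let X ⊆ {a, b}^G be the set of configurations x : G → {a, b} such that x(g t) ≠ x(g) for every g ∈ G. Then X is a nonempty strongly aperiodic subshift of finite type on G (it is the SFT defined by F = {1, t} and the two patterns assigning distinct symbols to 1 and t). -/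
variable {G A : Type*}

/-- The set of two-colorings of `G` alternating along right multiplication by `t`. -/
def altSet (G : Type*) [Group G] (t : G) : Set (G → Bool) :=
  {x | ∀ g : G, x (g * t) ≠ x g}

/-- Existence of a `t`-power index relative to the chosen coset representative. -/
lemma alt_exists_idx {G : Type*} [Group G] (t : G) (g : G) :
    ∃ k : ℤ, t ^ k = ((QuotientGroup.mk (s := Subgroup.zpowers t) g).out)⁻¹ * g := by
  have h : ((QuotientGroup.mk (s := Subgroup.zpowers t) g).out)⁻¹ * g ∈ Subgroup.zpowers t := by
    refine QuotientGroup.eq.mp ?_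
    rw [QuotientGroup.out_eq']
  obtain ⟨k, hk⟩ := h
  exact ⟨k, hk⟩

/-- An alternating configuration: parity of the `t`-power index. -/
noncomputable def altConfig {G : Type*} [Group G] (t : G) : G → Bool :=
  fun g => (Classical.choose (alt_exists_idx t g)).bodd

lemma altConfig_mem {G : Type*} [Group G] (t : G) (ht : ∀ n : ℕ, 0 < n → t ^ n ≠ 1) :
    altConfig t ∈ altSet G t := by
  have htfin : ¬ IsOfFinOrder t := by
    rw [isOfFinOrder_iff_pow_eq_one]
    rintro ⟨n, hn, hn1⟩
    exact ht n hn hn1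
  have hinj : Function.Injective fun n : ℤ => t ^ n :=
    injective_zpow_iff_not_isOfFinOrder.mpr htfin
  intro g
  have hmk : (QuotientGroup.mk (s := Subgroup.zpowers t) (g * t))
      = QuotientGroup.mk (s := Subgroup.zpowers t) g := by
    refine (QuotientGroup.eq).mpr ?_
    simpa [mul_inv_rev, mul_assoc] using
      Subgroup.inv_mem _ (Subgroup.mem_zpowers t)
  have hks : t ^ (Classical.choose (alt_exists_idx t g))
      = ((QuotientGroup.mk (s := Subgroup.zpowers t) g).out)⁻¹ * g :=
    Classical.choose_spec (alt_exists_idx t g)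
  have hks' : t ^ (Classical.choose (alt_exists_idx t (g * t)))
      = ((QuotientGroup.mk (s := Subgroup.zpowers t) (g * t)).out)⁻¹ * (g * t) :=
    Classical.choose_spec (alt_exists_idx t (g * t))
  have hout : (Quotient.out (QuotientGroup.mk (s := Subgroup.zpowers t) (g * t)))
      = Quotient.out (QuotientGroup.mk (s := Subgroup.zpowers t) g) := by rw [hmk]
  have heq : Classical.choose (alt_exists_idx t (g * t))
      = Classical.choose (alt_exists_idx t g) + 1 := by
    apply hinj
    show t ^ _ = t ^ _
    calc t ^ Classical.choose (alt_exists_idx t (g * t))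
        = (Quotient.out (QuotientGroup.mk (s := Subgroup.zpowers t) (g * t)))⁻¹ * (g * t) :=
          hks'
      _ = (Quotient.out (QuotientGroup.mk (s := Subgroup.zpowers t) g))⁻¹ * (g * t) := by
          rw [hout]
      _ = t ^ (Classical.choose (alt_exists_idx t g) + 1) := by
          rw [zpow_add_one, hks, mul_assoc]
  show (Classical.choose (alt_exists_idx t (g * t))).bodd
      ≠ (Classical.choose (alt_exists_idx t g)).bodd
  rw [heq]
  cases h : (Classical.choose (alt_exists_idx t g)).bodd <;> simp [Int.bodd_add, h]

/-- If `G` has exactly two conjugacy classes and `t ∈ G` has infinite order,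
then the set of configurations `x : G → Bool` with `x (g * t) ≠ x g` for all `g` is the SFT
defined by `F = {1, t}` and the two alternating patterns, and it is nonempty and strongly
aperiodic. -/
theorem alt_sft_nonempty_SA
    {G : Type*} [Group G]
    (hcls : ∀ g₁ g₂ : G, g₁ ≠ 1 → g₂ ≠ 1 → IsConj g₁ g₂)
    (t : G) (ht : ∀ n : ℕ, 0 < n → t ^ n ≠ 1) :
    altSet G t = SFT ({1, t} : Set G)
      {p : (({1, t} : Set G)) → Bool |
        p ⟨1, Set.mem_insert 1 {t}⟩ ≠ p ⟨t, Set.mem_insert_of_mem 1 rfl⟩} ∧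
    (altSet G t).Nonempty ∧
    ∀ x ∈ altSet G t, ∀ g : G, shift g x = x → g = 1 := by
  have ht1 : t ≠ 1 := by simpa using ht 1 one_pos
  refine ⟨?_, ⟨altConfig t, altConfig_mem t ht⟩, ?_⟩
  · ext x
    constructor
    · intro hx g
      simp only [Set.mem_setOf_eq, shift]
      intro h
      exact hx g⁻¹ (by simpa [mul_one] using h.symm)
    · intro hx g
      have := hx g⁻¹
      simp only [Set.mem_setOf_eq, shift, inv_inv, mul_one] at this
      exact fun h => this h.symm
  · intro x hx g hg
    by_contra hgne
    obtain ⟨c, hc⟩ := isConj_iff.mp (hcls g⁻¹ t⁻¹ (by simpa using hgne) (by simpa using ht1))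
    -- hc : c * g⁻¹ * c⁻¹ = t⁻¹
    have hkey : g⁻¹ * c⁻¹ = c⁻¹ * t⁻¹ := by
      rw [← hc]; group
    have hper : x (g⁻¹ * c⁻¹) = x c⁻¹ := congrFun hg c⁻¹
    rw [hkey] at hper
    have halt := hx (c⁻¹ * t⁻¹)
    rw [mul_assoc, inv_mul_cancel, mul_one] at halt
    exact halt hper.symm
end
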